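/- arXiv:0801.0120 — 2 statements merged into one kernel-verified Lean document; each statement's English description precedes it below -/
import Mathlib

section
/- If A = (1, a_1, …, a_k) is an orderly currency with a_1 ≥ 3, then a_i − a_{i−1} ≠ 1 for all i = 1, …, k. -/
/-- The largest coin of the currency with coins `a 0, …, a k` that is `≤ c`
(or `0` if there is none). -/
def bestCoin (a : ℕ → ℕ) (k : ℕ) (c : ℕ) : ℕ :=
  ((Finset.range (k + 1)).filter fun j => a j ≤ c).sup a

/-- The number of coins used by the greedy algorithm to pay the amount `c`,
using the currency with coins `a 0, …, a k`. -/
def grd (a : ℕ → ℕ) (k : ℕ) : ℕ → ℕ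
  | 0 => 0
  | c + 1 =>
    if h : 1 ≤ bestCoin a k (c + 1) then
      grd a k (c + 1 - bestCoin a k (c + 1)) + 1
    else 0
  decreasing_by omega

/-- The minimal number of coins needed to pay the amount `c`,
using the currency with coins `a 0, …, a k`. -/
noncomputable def opt (a : ℕ → ℕ) (k : ℕ) (c : ℕ) : ℕ :=
  sInf {n | ∃ x : Fin (k + 1) → ℕ, (∑ i, x i) = n ∧ (∑ i, x i * a i.1) = c}

/-- `a 0, …, a k` is a currency: it starts with the coin `1` and is strictly increasing. -/
def IsCurrency (a : ℕ → ℕ) (k : ℕ) : Prop :=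
  a 0 = 1 ∧ ∀ i j : ℕ, i < j → j ≤ k → a i < a j

/-- The currency with coins `a 0, …, a k` is orderly: the greedy payment is
optimal for every positive amount. -/
def Orderly (a : ℕ → ℕ) (k : ℕ) : Prop :=
  ∀ c : ℕ, 0 < c → opt a k c = grd a k c

/-- The set `𝒜(a) = ⋃_{m ≥ 1} {m·a − l : 0 ≤ l ≤ m}`. -/
def calA (a : ℕ) : Set ℕ :=
  {x | ∃ m l : ℕ, 1 ≤ m ∧ l ≤ m ∧ x = m * a - l}

/-!
Take the smallest `p` such that `p` and `p + 1` are both coins; since `a 1 ≥ 3`, `2` is not a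
coin, so `p ≥ 2`. The basic tool: if `b` is a coin, no coin lies in `(b, b + t]`, and `b + t` is
a sum of two coins, then greedy pays `b + t` as `b` followed by `t`, so orderliness forces
`grd t ≤ 1`, i.e. `t` is a coin. Now let `x < y` be coins with `d = y - x < p`. If there were no
coin in `(y, y + p - 1]`, then `p + x = y + (p - d)` and `(p + 1) + x = y + (p - d + 1)` would
make `p - d` and `p - d + 1` consecutive coins below `p` (for `d = 1` the second one is `p`).
So there is a coin `y'` with `0 < y' - y < p`, and `(y, y')` is again such a pair. Starting
from `(p, p + 1)` this yields coins above every bound, which is absurd.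
-/

def IsCoin (a : ℕ → ℕ) (k : ℕ) (x : ℕ) : Prop := ∃ j ≤ k, a j = x

section

variable {a : ℕ → ℕ} {k : ℕ}

lemma IsCurrency.le_of_le (hcur : IsCurrency a k) {i j : ℕ} (hij : i ≤ j) (hj : j ≤ k) :
    a i ≤ a j := by
  rcases hij.eq_or_lt with rfl | h
  · exact le_rfl
  · exact (hcur.2 i j h hj).le

lemma IsCoin.one_le (hcur : IsCurrency a k) {x : ℕ} (hx : IsCoin a k x) : 1 ≤ x := by
  obtain ⟨j, hj, rfl⟩ := hx
  exact hcur.1 ▸ hcur.le_of_le j.zero_le hj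

lemma IsCoin.le_top (hcur : IsCurrency a k) {x : ℕ} (hx : IsCoin a k x) : x ≤ a k := by
  obtain ⟨j, hj, rfl⟩ := hx
  exact hcur.le_of_le hj le_rfl

lemma not_isCoin_two (hcur : IsCurrency a k) (ha1 : 3 ≤ a 1) : ¬ IsCoin a k 2 := by
  rintro ⟨j, hj, h2⟩
  rcases j.eq_zero_or_pos with rfl | hj0
  · rw [hcur.1] at h2
    omega
  · have := hcur.le_of_le (show 1 ≤ j from hj0) hj
    omega

lemma bestCoin_le_self (c : ℕ) : bestCoin a k c ≤ c :=
  Finset.sup_le fun _ hj => (Finset.mem_filter.mp hj).2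

lemma le_bestCoin {c j : ℕ} (hj : j ≤ k) (hjc : a j ≤ c) : a j ≤ bestCoin a k c :=
  Finset.le_sup (Finset.mem_filter.mpr ⟨Finset.mem_range.mpr (Nat.lt_succ_of_le hj), hjc⟩)

lemma one_le_bestCoin (hcur : IsCurrency a k) {c : ℕ} (hc : 1 ≤ c) : 1 ≤ bestCoin a k c :=
  hcur.1 ▸ le_bestCoin k.zero_le (hcur.1 ▸ hc)

lemma isCoin_bestCoin (hcur : IsCurrency a k) {c : ℕ} (hc : 1 ≤ c) :
    IsCoin a k (bestCoin a k c) := by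
  have hne : ((Finset.range (k + 1)).filter fun j => a j ≤ c).Nonempty :=
    ⟨0, Finset.mem_filter.mpr ⟨Finset.mem_range.mpr k.succ_pos, hcur.1 ▸ hc⟩⟩
  obtain ⟨j, hj, hsup⟩ := Finset.exists_mem_eq_sup _ hne a
  exact ⟨j, Nat.le_of_lt_succ (Finset.mem_range.mp (Finset.mem_filter.mp hj).1), hsup.symm⟩

lemma grd_of_one_le (hcur : IsCurrency a k) {c : ℕ} (hc : 1 ≤ c) :
    grd a k c = grd a k (c - bestCoin a k c) + 1 := by
  obtain ⟨n, rfl⟩ := Nat.exists_eq_add_of_le' hc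
  rw [grd, dif_pos (one_le_bestCoin hcur hc)]

lemma isCoin_of_grd_le_one (hcur : IsCurrency a k) {c : ℕ} (hc : 1 ≤ c) (hgrd : grd a k c ≤ 1) :
    IsCoin a k c := by
  rw [grd_of_one_le hcur hc] at hgrd
  have hrest : c - bestCoin a k c = 0 := by
    by_contra hpos
    rw [grd_of_one_le hcur (Nat.one_le_iff_ne_zero.mpr hpos)] at hgrd
    omega
  have hbest : bestCoin a k c = c := le_antisymm (bestCoin_le_self c) (by omega)
  exact hbest ▸ isCoin_bestCoin hcur hc

lemma grd_add_of_no_coin_between (hcur : IsCurrency a k) {b t : ℕ} (hb : IsCoin a k b)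
    (hgap : ∀ c, IsCoin a k c → c ≤ b + t → c ≤ b) :
    grd a k (b + t) = grd a k t + 1 := by
  have hb1 := hb.one_le hcur
  have hbest : bestCoin a k (b + t) = b := by
    refine le_antisymm (Finset.sup_le fun j hj => ?_) ?_
    · obtain ⟨hjk, hjc⟩ := Finset.mem_filter.mp hj
      exact hgap _ ⟨j, Nat.le_of_lt_succ (Finset.mem_range.mp hjk), rfl⟩ hjc
    · obtain ⟨j, hj, rfl⟩ := hb
      exact le_bestCoin hj (Nat.le_add_right _ _)
  rw [grd_of_one_le hcur (by omega), hbest, Nat.add_sub_cancel_left]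

lemma opt_add_le_two {z z' : ℕ} (hz : IsCoin a k z) (hz' : IsCoin a k z') :
    opt a k (z + z') ≤ 2 := by
  obtain ⟨j, hj, rfl⟩ := hz
  obtain ⟨j', hj', rfl⟩ := hz'
  refine Nat.sInf_le ⟨Pi.single (⟨j, Nat.lt_succ_of_le hj⟩ : Fin (k + 1)) 1 +
    Pi.single (⟨j', Nat.lt_succ_of_le hj'⟩ : Fin (k + 1)) 1, ?_, ?_⟩
  · simp [Finset.sum_add_distrib]
  · simp [Finset.sum_add_distrib, add_mul, Pi.single_apply, ite_mul]

lemma Orderly.isCoin_of_no_coin_between (hcur : IsCurrency a k) (hord : Orderly a k)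
    {b t z z' : ℕ} (ht : 1 ≤ t) (hb : IsCoin a k b)
    (hgap : ∀ c, IsCoin a k c → c ≤ b + t → c ≤ b)
    (hz : IsCoin a k z) (hz' : IsCoin a k z') (hsum : z + z' = b + t) :
    IsCoin a k t := by
  have hgrd := grd_add_of_no_coin_between hcur hb hgap
  have hopt := hord (b + t) (by omega)
  have htwo := hsum ▸ opt_add_le_two hz hz'
  exact isCoin_of_grd_le_one hcur ht (by omega)

lemma exists_coin_near_above (hcur : IsCurrency a k) (hord : Orderly a k) {p : ℕ}
    (hp : IsCoin a k p) (hp1 : IsCoin a k (p + 1))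
    (hmin : ∀ q < p, ¬ (IsCoin a k q ∧ IsCoin a k (q + 1)))
    {x y : ℕ} (hx : IsCoin a k x) (hy : IsCoin a k y) (hxy : x < y) (hyx : y - x < p) :
    ∃ y', IsCoin a k y' ∧ y < y' ∧ y' - y < p := by
  by_contra! hfar
  have hgap (t : ℕ) (ht : t < p) : ∀ c, IsCoin a k c → c ≤ y + t → c ≤ y := fun c hc hct => by
    by_contra hyc
    have := hfar c hc (by omega)
    omega
  have hs : IsCoin a k (p - (y - x)) :=
    hord.isCoin_of_no_coin_between hcur (by omega) hy (hgap _ (by omega)) hp hx (by omega)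
  have hs1 : IsCoin a k (p - (y - x) + 1) := by
    by_cases hd : y - x = 1
    · rwa [hd, Nat.sub_add_cancel (by omega)]
    · exact hord.isCoin_of_no_coin_between hcur (by omega) hy (hgap _ (by omega)) hp1 hx
        (by omega)
  exact hmin _ (by omega) ⟨hs, hs1⟩

lemma not_isCoin_and_isCoin_succ (hcur : IsCurrency a k) (hord : Orderly a k) (ha1 : 3 ≤ a 1)
    (p : ℕ) : ¬ (IsCoin a k p ∧ IsCoin a k (p + 1)) := by
  refine Nat.strong_induction_on p fun p hmin => ?_
  rintro ⟨hp, hp1⟩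
  have hp_ne_one : p ≠ 1 := by
    rintro rfl
    exact not_isCoin_two hcur ha1 hp1
  have hp_pos := hp.one_le hcur
  let S : Set ℕ := {y | IsCoin a k y ∧ ∃ x, IsCoin a k x ∧ x < y ∧ y - x < p}
  have hbdd : BddAbove S := ⟨a k, fun y hy => hy.1.le_top hcur⟩
  have hmem : p + 1 ∈ S := ⟨hp1, p, hp, by omega, by omega⟩
  obtain ⟨hy, x, hx, hxy, hyx⟩ : sSup S ∈ S := Nat.sSup_mem ⟨_, hmem⟩ hbdd
  obtain ⟨y', hy', hlt, hclose⟩ := exists_coin_near_above hcur hord hp hp1 hmin hx hy hxy hyx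
  exact hlt.not_ge (le_csSup hbdd ⟨hy', _, hy, hlt, hclose⟩)

end

/-- If `(1, a 1, …, a k)` is orderly and `a 1 ≥ 3`, then no two consecutive coins
differ by `1`. -/
theorem no_unit_gap (a : ℕ → ℕ) (k : ℕ)
    (hcur : IsCurrency a k) (hord : Orderly a k) (ha1 : 3 ≤ a 1) :
    ∀ i : ℕ, 1 ≤ i → i ≤ k → a i - a (i - 1) ≠ 1 := by
  intro i hi hik hgap
  have hlt : a (i - 1) < a i := hcur.2 (i - 1) i (by omega) hik
  have hsucc : a i = a (i - 1) + 1 := by omega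
  have hprev : IsCoin a k (a (i - 1)) := ⟨i - 1, by omega, rfl⟩
  exact not_isCoin_and_isCoin_succ hcur hord ha1 _ ⟨hprev, i, hik, hsucc⟩
end

section
/- A five-coin currency A = (1, a_1, a_2, a_3, a_4) is orderly if and only if either there exists an integer a ≥ 4 with (a_1, a_2, a_3, a_4) = (2, a, a+1, 2a), or A is totally orderly. -/
variable {W : ℕ → ℕ} {k n : ℕ}

theorem IsCurrency.mono (hW : IsCurrency W n) (hkn : k ≤ n) : IsCurrency W k :=
  ⟨hW.1, fun i j hij hj => hW.2 i j hij (hj.trans hkn)⟩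

theorem IsCurrency.coin_le_coin (hW : IsCurrency W n) {i j : ℕ} (hij : i ≤ j) (hj : j ≤ n) :
    W i ≤ W j :=
  hij.eq_or_lt.elim (fun h => h ▸ le_rfl) fun h => (hW.2 i j h hj).le

theorem IsCurrency.one_le (hW : IsCurrency W n) {i : ℕ} (hi : i ≤ n) : 1 ≤ W i :=
  hW.1 ▸ hW.coin_le_coin (Nat.zero_le i) hi

theorem bestCoin_le_self_s7 (x : ℕ) : bestCoin W k x ≤ x :=
  Finset.sup_le fun _ hj => (Finset.mem_filter.1 hj).2

theorem le_bestCoin_s7 {i x : ℕ} (hi : i ≤ k) (hx : W i ≤ x) : W i ≤ bestCoin W k x :=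
  Finset.le_sup (f := W) (Finset.mem_filter.2 ⟨Finset.mem_range.2 (Nat.lt_succ_of_le hi), hx⟩)

theorem exists_bestCoin_eq (h0 : W 0 = 1) {x : ℕ} (hx : 0 < x) :
    ∃ j ≤ k, bestCoin W k x = W j := by
  have hne : ((Finset.range (k + 1)).filter fun j => W j ≤ x).Nonempty :=
    ⟨0, Finset.mem_filter.2 ⟨by simp, by omega⟩⟩
  obtain ⟨j, hj, hjx⟩ := Finset.exists_mem_eq_sup _ hne W
  exact ⟨j, Nat.lt_succ_iff.1 (Finset.mem_range.1 (Finset.mem_filter.1 hj).1), hjx⟩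

theorem bestCoin_succ_of_lt {x : ℕ} (hx : x < W (k + 1)) :
    bestCoin W (k + 1) x = bestCoin W k x := by
  rw [bestCoin, bestCoin, Finset.range_add_one, Finset.filter_insert, if_neg (by omega)]

theorem grd_zero : grd W k 0 = 0 := by
  rw [grd]

theorem grd_of_pos (h0 : W 0 = 1) {x : ℕ} (hx : 0 < x) :
    grd W k x = grd W k (x - bestCoin W k x) + 1 := by
  obtain ⟨y, rfl⟩ : ∃ y, x = y + 1 := ⟨x - 1, by omega⟩
  have h1 := le_bestCoin_s7 (W := W) (k := k) (Nat.zero_le k) (show W 0 ≤ y + 1 by omega)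
  rw [grd, dif_pos (by omega)]

theorem grd_pos (h0 : W 0 = 1) {x : ℕ} (hx : 0 < x) : 0 < grd W k x := by
  rw [grd_of_pos h0 hx]
  omega

theorem grd_coin (hW : IsCurrency W k) {j : ℕ} (hj : j ≤ k) : grd W k (W j) = 1 := by
  have hb : bestCoin W k (W j) = W j := (bestCoin_le_self_s7 _).antisymm (le_bestCoin_s7 hj le_rfl)
  rw [grd_of_pos hW.1 (hW.one_le hj), hb, Nat.sub_self, grd_zero]

theorem eq_zero_or_exists_coin_of_grd_le_one (h0 : W 0 = 1) {x : ℕ} (hx : grd W k x ≤ 1) :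
    x = 0 ∨ ∃ j ≤ k, W j = x := by
  rcases Nat.eq_zero_or_pos x with rfl | hpos
  · exact Or.inl rfl
  obtain ⟨j, hj, hjx⟩ := exists_bestCoin_eq (k := k) h0 hpos
  have hle := bestCoin_le_self_s7 (W := W) (k := k) x
  rw [grd_of_pos h0 hpos] at hx
  have hrest : ¬ 0 < x - bestCoin W k x := fun h => by
    have := grd_pos (k := k) h0 h
    omega
  exact Or.inr ⟨j, hj, by omega⟩

theorem grd_succ_of_lt (h0 : W 0 = 1) {x : ℕ} (hx : x < W (k + 1)) :
    grd W (k + 1) x = grd W k x := by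
  induction x using Nat.strong_induction_on with
  | _ x ih =>
    rcases Nat.eq_zero_or_pos x with rfl | hpos
    · rw [grd_zero, grd_zero]
    have hb := bestCoin_succ_of_lt hx
    have hle := bestCoin_le_self_s7 (W := W) (k := k) x
    have h1 := le_bestCoin_s7 (W := W) (k := k) (Nat.zero_le k) (show W 0 ≤ x by omega)
    rw [grd_of_pos h0 hpos, grd_of_pos h0 hpos, hb, ih _ (by omega) (by omega)]

theorem grd_add_top (hW : IsCurrency W k) (x : ℕ) : grd W k (x + W k) = grd W k x + 1 := by
  have hb : bestCoin W k (x + W k) = W k :=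
    le_antisymm (Finset.sup_le fun i hi => hW.coin_le_coin
      (Nat.lt_succ_iff.1 (Finset.mem_range.1 (Finset.mem_filter.1 hi).1)) le_rfl)
      (le_bestCoin_s7 le_rfl (by omega))
  rw [grd_of_pos hW.1 (by have := hW.one_le le_rfl; omega), hb, Nat.add_sub_cancel]

theorem grd_mul_add (hW : IsCurrency W (k + 1)) (m : ℕ) {u : ℕ} (hu : u < W (k + 1)) :
    grd W (k + 1) (m * W (k + 1) + u) = m + grd W k u := by
  induction m with
  | zero => rw [zero_mul, zero_add, zero_add, grd_succ_of_lt hW.1 hu]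
  | succ m ih => rw [add_one_mul, add_right_comm, grd_add_top hW, ih]; ring

theorem grd_index_zero (h0 : W 0 = 1) (x : ℕ) : grd W 0 x = x := by
  induction x with
  | zero => exact grd_zero
  | succ x ih =>
    have hW : IsCurrency W 0 := ⟨h0, fun _ _ hij hj => absurd hij (by omega)⟩
    rw [← h0, grd_add_top hW, ih, h0]

theorem grd_eq_of_lt (hW : IsCurrency W n) {m x : ℕ} (hmn : m ≤ n) (hx : x < W (m + 1)) :
    grd W n x = grd W m x := by
  induction n, hmn using Nat.le_induction with
  | base => rfl
  | succ n hmn ih =>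
    rw [grd_succ_of_lt hW.1 (hx.trans_le (hW.coin_le_coin (by omega) le_rfl)),
      ih (hW.mono n.le_succ)]

theorem grd_one_mul_add (hW : IsCurrency W 1) (m : ℕ) {u : ℕ} (hu : u < W 1) :
    grd W 1 (m * W 1 + u) = m + u := by
  rw [grd_mul_add hW m hu, grd_index_zero hW.1]

theorem grd_one_of_lt (hW : IsCurrency W 1) {u : ℕ} (hu : u < W 1) : grd W 1 u = u := by
  simpa using grd_one_mul_add hW 0 hu

theorem opt_le (x : Fin (k + 1) → ℕ) {c : ℕ} (hx : ∑ i, x i * W i = c) :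
    opt W k c ≤ ∑ i, x i :=
  Nat.sInf_le ⟨x, rfl, hx⟩

theorem exists_sum_eq_opt (h0 : W 0 = 1) (c : ℕ) :
    ∃ x : Fin (k + 1) → ℕ, ∑ i, x i = opt W k c ∧ ∑ i, x i * W i = c := by
  have hne : {n | ∃ x : Fin (k + 1) → ℕ, ∑ i, x i = n ∧ ∑ i, x i * W i = c}.Nonempty :=
    ⟨c, Pi.single 0 c, by simp, by simp [Pi.single_apply, h0]⟩
  exact Nat.sInf_mem hne

theorem sum_add_single {ι : Type*} [Fintype ι] [DecidableEq ι] (x : ι → ℕ) (j : ι) :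
    ∑ i, (x + Pi.single j 1 : ι → ℕ) i = ∑ i, x i + 1 := by
  simp [Finset.sum_add_distrib]

theorem sum_add_single_mul {ι : Type*} [Fintype ι] [DecidableEq ι] (x w : ι → ℕ) (j : ι) :
    ∑ i, (x + Pi.single j 1 : ι → ℕ) i * w i = ∑ i, x i * w i + w j := by
  simp [add_mul, Finset.sum_add_distrib, Pi.single_apply]

theorem exists_sum_eq_grd (h0 : W 0 = 1) (c : ℕ) :
    ∃ x : Fin (k + 1) → ℕ, ∑ i, x i = grd W k c ∧ ∑ i, x i * W i = c := by
  induction c using Nat.strong_induction_on with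
  | _ c ih =>
    rcases Nat.eq_zero_or_pos c with rfl | hc
    · exact ⟨0, by simp [grd_zero]⟩
    obtain ⟨j, hj, hb⟩ := exists_bestCoin_eq (k := k) h0 hc
    have hle := bestCoin_le_self_s7 (W := W) (k := k) c
    have h1 := le_bestCoin_s7 (W := W) (k := k) (Nat.zero_le k) (show W 0 ≤ c by omega)
    obtain ⟨x, hxs, hxv⟩ := ih (c - W j) (by omega)
    refine ⟨x + Pi.single (⟨j, by omega⟩ : Fin (k + 1)) 1, ?_, ?_⟩
    · rw [sum_add_single, hxs, grd_of_pos h0 hc, hb]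
    · rw [sum_add_single_mul, hxv, Fin.val_mk]
      omega

theorem opt_le_grd (h0 : W 0 = 1) (c : ℕ) : opt W k c ≤ grd W k c :=
  let ⟨x, hxs, hxv⟩ := exists_sum_eq_grd h0 c
  hxs ▸ opt_le x hxv

theorem grd_add_mul_le_of_grd_add_le {e : ℕ} (h : ∀ x, grd W k (x + e) ≤ grd W k x + 1)
    (x m : ℕ) :
    grd W k (x + m * e) ≤ grd W k x + m := by
  induction m with
  | zero => simp
  | succ m ih =>
    calc grd W k (x + (m + 1) * e) = grd W k (x + m * e + e) := by rw [add_one_mul, add_assoc]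
      _ ≤ grd W k x + (m + 1) := by have := h (x + m * e); omega

theorem grd_sum_le (h : ∀ j ≤ k, ∀ x, grd W k (x + W j) ≤ grd W k x + 1)
    (x : Fin (k + 1) → ℕ) (s : Finset (Fin (k + 1))) :
    grd W k (∑ i ∈ s, x i * W i) ≤ ∑ i ∈ s, x i := by
  induction s using Finset.induction_on with
  | empty => simp [grd_zero]
  | insert j s hj ih =>
    rw [Finset.sum_insert hj, Finset.sum_insert hj, add_comm]
    have := grd_add_mul_le_of_grd_add_le (h j (Nat.lt_succ_iff.1 j.2))
      (∑ i ∈ s, x i * W i) (x j)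
    omega

theorem orderly_iff_grd_add_le (h0 : W 0 = 1) :
    Orderly W k ↔ ∀ j ≤ k, ∀ x, grd W k (x + W j) ≤ grd W k x + 1 := by
  constructor
  · intro hO j hj x
    rcases Nat.eq_zero_or_pos (x + W j) with h | h
    · rw [h, grd_zero]
      omega
    obtain ⟨y, hys, hyv⟩ := exists_sum_eq_opt (k := k) h0 x
    have hopt := opt_le (y + Pi.single (⟨j, by omega⟩ : Fin (k + 1)) 1) (c := x + W j)
      (by rw [sum_add_single_mul, hyv])
    rw [sum_add_single, hys] at hopt
    have := opt_le_grd (k := k) h0 x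
    rw [← hO _ h]
    omega
  · intro h c _
    obtain ⟨x, hxs, hxv⟩ := exists_sum_eq_opt (k := k) h0 c
    refine le_antisymm (opt_le_grd h0 c) ?_
    simpa [hxs, hxv] using grd_sum_le h x Finset.univ

theorem Orderly.grd_add_le (hO : Orderly W k) (h0 : W 0 = 1) {j : ℕ} (hj : j ≤ k) (x : ℕ) :
    grd W k (x + W j) ≤ grd W k x + 1 :=
  (orderly_iff_grd_add_le h0).1 hO j hj x

theorem Orderly.grd_add_mul_le (hO : Orderly W k) (h0 : W 0 = 1) {j : ℕ} (hj : j ≤ k)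
    (x m : ℕ) : grd W k (x + m * W j) ≤ grd W k x + m :=
  grd_add_mul_le_of_grd_add_le (hO.grd_add_le h0 hj) x m

theorem grd_succ_add_le (hW : IsCurrency W (k + 1)) {e : ℕ} (he : e ≤ W (k + 1))
    (hstep : ∀ v, v + e < W (k + 1) → grd W k (v + e) ≤ grd W k v + 1)
    (hcross : ∀ v < W (k + 1), W (k + 1) ≤ v + e → grd W k (v + e - W (k + 1)) ≤ grd W k v)
    (y : ℕ) : grd W (k + 1) (y + e) ≤ grd W (k + 1) y + 1 := by
  have hT := hW.one_le le_rfl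
  obtain ⟨m, v, hv, rfl⟩ : ∃ m v, v < W (k + 1) ∧ y = m * W (k + 1) + v :=
    ⟨y / W (k + 1), y % W (k + 1), Nat.mod_lt _ hT, (Nat.div_add_mod' y _).symm⟩
  rw [grd_mul_add hW m hv]
  by_cases hve : v + e < W (k + 1)
  · rw [add_assoc, grd_mul_add hW m hve]
    have := hstep v hve
    omega
  · rw [show m * W (k + 1) + v + e = (m + 1) * W (k + 1) + (v + e - W (k + 1)) by
        rw [add_one_mul]; omega, grd_mul_add hW _ (by omega)]
    have := hcross v hv (by omega)
    omega

theorem Orderly.succ_of_grd_add_sub_le (hO : Orderly W k) (hW : IsCurrency W (k + 1))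
    (hcross : ∀ j, 0 < j → j ≤ k → ∀ v < W (k + 1), W (k + 1) ≤ v + W j →
      grd W k (v + W j - W (k + 1)) ≤ grd W k v) :
    Orderly W (k + 1) := by
  refine (orderly_iff_grd_add_le hW.1).2 fun j hj => ?_
  rcases hj.eq_or_lt with rfl | hjk
  · exact fun x => (grd_add_top hW x).le
  refine grd_succ_add_le hW (hW.coin_le_coin hj le_rfl) (fun v _ => hO.grd_add_le hW.1 (by omega) v)
    fun v hv hle => ?_
  rcases Nat.eq_zero_or_pos j with rfl | hj0
  · rw [hW.1] at hle ⊢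
    rw [show v + 1 - W (k + 1) = 0 by omega, grd_zero]
    omega
  · exact hcross j hj0 (by omega) v hv hle

theorem orderly_zero (h0 : W 0 = 1) : Orderly W 0 :=
  (orderly_iff_grd_add_le h0).2 fun j hj x => by
    obtain rfl : j = 0 := by omega
    rw [h0, grd_index_zero h0, grd_index_zero h0]

theorem orderly_one (hW : IsCurrency W 1) : Orderly W 1 :=
  (orderly_zero hW.1).succ_of_grd_add_sub_le hW fun _ hj0 hj => absurd hj (by omega)

theorem Orderly.grd_le_grd_sub_add (hO : Orderly W (k + 1)) (hW : IsCurrency W (k + 1))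
    {j x : ℕ} (hj : j ≤ k) (hx : x < W j) : grd W k x ≤ grd W k (W (k + 1) - W j + x) := by
  have hjT := hW.2 j (k + 1) (by omega) le_rfl
  have h := hO.grd_add_le hW.1 (j := j) (by omega) (W (k + 1) - W j + x)
  rw [show W (k + 1) - W j + x + W j = x + W (k + 1) by omega, grd_add_top hW,
    grd_succ_of_lt hW.1 (show x < W (k + 1) by omega),
    grd_succ_of_lt hW.1 (show W (k + 1) - W j + x < W (k + 1) by omega)] at h
  omega

theorem Orderly.grd_sub_gap_le_one (hO : Orderly W (k + 1)) (hW : IsCurrency W (k + 1))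
    {i j : ℕ} (hi : i ≤ k) (hj : j ≤ k) : grd W k (W i - (W (k + 1) - W j)) ≤ 1 := by
  have hiT := hW.2 i (k + 1) (by omega) le_rfl
  rcases le_or_gt (W i) (W (k + 1) - W j) with h | h
  · rw [Nat.sub_eq_zero_of_le h, grd_zero]
    omega
  · have := hO.grd_le_grd_sub_add hW hj (x := W i - (W (k + 1) - W j)) (by omega)
    rwa [show W (k + 1) - W j + (W i - (W (k + 1) - W j)) = W i by omega,
      grd_coin (hW.mono k.le_succ) hi] at this

theorem Orderly.grd_add_sub_le (hO : Orderly W n) (hW : IsCurrency W n) {j v : ℕ}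
    (hkn : k < n) (hj : j ≤ k) (hv : v < W (k + 1)) (hle : W (k + 1) ≤ v + W j)
    (hlt : v + W j < W (k + 2)) : grd W k (v + W j - W (k + 1)) ≤ grd W k v := by
  have hW' : IsCurrency W (k + 1) := hW.mono hkn
  have hjT := hW'.coin_le_coin (show j ≤ k + 1 by omega) le_rfl
  have hk : k + 1 ≤ n := hkn
  have h := hO.grd_add_le hW.1 (j := j) (by omega) v
  rw [grd_eq_of_lt hW hk hlt, grd_eq_of_lt hW hk ((Nat.le_add_right v (W j)).trans_lt hlt),
    show v + W j = 1 * W (k + 1) + (v + W j - W (k + 1)) by omega,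
    grd_mul_add hW' 1 (by omega), grd_succ_of_lt hW.1 hv] at h
  omega

theorem IsCurrency.chain_three (hW : IsCurrency W 3) : 1 < W 1 ∧ W 1 < W 2 ∧ W 2 < W 3 :=
  ⟨hW.1 ▸ hW.2 0 1 (by norm_num) (by norm_num), hW.2 1 2 (by norm_num) (by norm_num),
    hW.2 2 3 (by norm_num) (by norm_num)⟩

theorem IsCurrency.chain_four (hW : IsCurrency W 4) :
    1 < W 1 ∧ W 1 < W 2 ∧ W 2 < W 3 ∧ W 3 < W 4 :=
  ⟨hW.1 ▸ hW.2 0 1 (by norm_num) (by norm_num), hW.2 1 2 (by norm_num) (by norm_num),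
    hW.2 2 3 (by norm_num) (by norm_num), hW.2 3 4 (by norm_num) (by norm_num)⟩

theorem eq_of_grd_three_le_one (hW : IsCurrency W 3) {x : ℕ} (hx : grd W 3 x ≤ 1) :
    x = 0 ∨ x = 1 ∨ x = W 1 ∨ x = W 2 ∨ x = W 3 := by
  rcases eq_zero_or_exists_coin_of_grd_le_one hW.1 hx with h | ⟨j, hj, rfl⟩
  · exact Or.inl h
  · interval_cases j <;> simp [hW.1]

theorem Orderly.grd_mul_add_mul_le (hO : Orderly W k) (h0 : W 0 = 1) {i j : ℕ} (hi : i ≤ k)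
    (hj : j ≤ k) (x m l : ℕ) : grd W k (x + m * W i + l * W j) ≤ x + m + l := by
  have h1 := hO.grd_add_mul_le h0 (Nat.zero_le k) 0 x
  have h2 := hO.grd_add_mul_le h0 hi x m
  have h3 := hO.grd_add_mul_le h0 hj (x + m * W i) l
  rw [h0, mul_one, zero_add, grd_zero] at h1
  omega

theorem exists_eq_mul_add_of_not_orderly_two (hW : IsCurrency W 2) (h : ¬ Orderly W 2) :
    ∃ q r, W 2 = q * W 1 + r ∧ 0 < q ∧ 0 < r ∧ q + r < W 1 := by
  have h1 := hW.1 ▸ hW.2 0 1 (by norm_num) (by norm_num)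
  have h12 := hW.2 1 2 (by norm_num) (by norm_num)
  have hW1 : IsCurrency W 1 := hW.mono (by norm_num)
  obtain ⟨q, r, hb, hr⟩ : ∃ q r, W 2 = q * W 1 + r ∧ r < W 1 :=
    ⟨_, _, (Nat.div_add_mod' _ _).symm, Nat.mod_lt _ (by omega)⟩
  have hq : 0 < q := Nat.pos_of_ne_zero (by rintro rfl; omega)
  refine ⟨q, r, hb, hq, ?_⟩
  by_contra hqr
  refine h ((orderly_one hW1).succ_of_grd_add_sub_le hW
    fun j hj0 hj v (hv : v < W 2) (hle : W 2 ≤ v + W j) => ?_)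
  obtain rfl : j = 1 := by omega
  have hqa : W 1 ≤ q * W 1 := Nat.le_mul_of_pos_left _ hq
  obtain ⟨x, hx, rfl⟩ : ∃ x < W 1, v = W 2 - W 1 + x :=
    ⟨v + W 1 - W 2, by omega, by omega⟩
  rw [show W 2 - W 1 + x + W 1 - W 2 = x by omega, grd_one_of_lt hW1 hx]
  rcases lt_or_ge (r + x) (W 1) with hs | hs
  · rw [show W 2 - W 1 + x = (q - 1) * W 1 + (r + x) by rw [Nat.sub_one_mul]; omega,
      grd_one_mul_add hW1 _ hs]
    omega
  · rw [show W 2 - W 1 + x = q * W 1 + (r + x - W 1) by omega, grd_one_mul_add hW1 _ (by omega)]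
    omega

theorem grd_three_two_mul (hW : IsCurrency W 3) {q : ℕ} (hb : W 2 = q * W 1 + 1) (hq : 0 < q)
    (hc : W 3 + 1 = W 1 + W 2) (ha : 2 < W 1) : grd W 3 (2 * W 2) = q + 2 := by
  obtain ⟨h1, h12, h23⟩ := hW.chain_three
  have hqa : W 1 ≤ q * W 1 := Nat.le_mul_of_pos_left _ hq
  rw [show 2 * W 2 = 1 * W 3 + (W 2 + 1 - W 1) by omega, grd_mul_add hW 1 (show _ < W 3 by omega),
    grd_succ_of_lt hW.1 (show W 2 + 1 - W 1 < W 2 by omega),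
    show W 2 + 1 - W 1 = (q - 1) * W 1 + 2 by rw [Nat.sub_one_mul]; omega,
    grd_one_mul_add (hW.mono (by norm_num)) _ ha]
  omega

theorem orderly_two_of_orderly_three (hW : IsCurrency W 3) (hO : Orderly W 3) : Orderly W 2 := by
  by_contra h
  obtain ⟨q, r, hb, hq, hr, hqr⟩ :=
    exists_eq_mul_add_of_not_orderly_two (hW.mono (by norm_num)) h
  obtain ⟨h1, h12, h23⟩ := hW.chain_three
  have hW1 : IsCurrency W 1 := hW.mono (by norm_num)
  have hW2 : IsCurrency W 2 := hW.mono (by norm_num)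
  -- Greedy overpays one of `(q + 1) a = b + (a - r)`, `(c - b - 1) + a + b = c + (a - 1)`, `2 b`.
  rcases lt_or_ge (W 1 + W 2) (W 3 + r) with hc | hc
  · have h := hO.grd_mul_add_mul_le hW.1 (i := 1) (j := 1) (by norm_num) (by norm_num) 0 (q + 1) 0
    rw [show 0 + (q + 1) * W 1 + 0 * W 1 = 1 * W 2 + (W 1 - r) by rw [add_one_mul]; omega,
      grd_succ_of_lt hW.1 (show _ < W 3 by omega), grd_mul_add hW2 1 (show _ < W 2 by omega),
      grd_one_of_lt hW1 (by omega)] at h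
    omega
  rcases le_or_gt (W 3 + 2) (W 1 + W 2) with hc' | hc'
  · have h := hO.grd_mul_add_mul_le hW.1 (i := 1) (j := 2) (by norm_num) (by norm_num)
      (W 3 - W 2 - 1) 1 1
    rw [show W 3 - W 2 - 1 + 1 * W 1 + 1 * W 2 = 1 * W 3 + (W 1 - 1) by omega,
      grd_mul_add hW 1 (show _ < W 3 by omega), grd_succ_of_lt hW.1 (show _ < W 2 by omega),
      grd_one_of_lt hW1 (by omega)] at h
    omega
  · have h := hO.grd_mul_add_mul_le hW.1 (i := 2) (j := 2) (by norm_num) (by norm_num) 0 2 0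
    rw [show 0 + 2 * W 2 + 0 * W 2 = 2 * W 2 by omega,
      grd_three_two_mul hW (show W 2 = q * W 1 + 1 by omega) hq (by omega) (by omega)] at h
    omega

theorem Orderly.coin_one_le_gap_add_one (hO : Orderly W 4) (hW : IsCurrency W 4) :
    W 1 ≤ W 4 - W 3 + 1 := by
  obtain ⟨h1, h12, h23, h34⟩ := hW.chain_four
  have h : grd W 3 (W 1 - (W 4 - W 3)) ≤ 1 :=
    hO.grd_sub_gap_le_one hW (by norm_num) (by norm_num)
  rcases eq_of_grd_three_le_one (hW.mono (by norm_num)) h with h | h | h | h | h <;> omega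

theorem Orderly.coin_two_sub_gap_eq (hO : Orderly W 4) (hW : IsCurrency W 4)
    (ht : W 4 - W 3 < W 2) :
    W 2 - (W 4 - W 3) = 1 ∨ W 2 - (W 4 - W 3) = W 1 := by
  obtain ⟨h1, h12, h23, h34⟩ := hW.chain_four
  have h : grd W 3 (W 3 - (W 4 - W 2)) ≤ 1 :=
    hO.grd_sub_gap_le_one hW (by norm_num) (by norm_num)
  rcases eq_of_grd_three_le_one (hW.mono (by norm_num)) h with h | h | h | h | h <;> omega

theorem Orderly.coin_three_sub_gap_eq (hO : Orderly W 4) (hW : IsCurrency W 4)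
    (ht : W 4 - W 3 < W 3) :
    W 3 - (W 4 - W 3) = 1 ∨ W 3 - (W 4 - W 3) = W 1 ∨ W 3 - (W 4 - W 3) = W 2 := by
  obtain ⟨h1, h12, h23, h34⟩ := hW.chain_four
  have h : grd W 3 (W 3 - (W 4 - W 3)) ≤ 1 :=
    hO.grd_sub_gap_le_one hW (by norm_num) (by norm_num)
  rcases eq_of_grd_three_le_one (hW.mono (by norm_num)) h with h | h | h | h | h <;> omega

theorem Orderly.grd_two_add_coin_one_sub_le (hO : Orderly W 4) (hW : IsCurrency W 4) {v : ℕ}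
    (hv : v < W 3) (hle : W 3 ≤ v + W 1) :
    grd W 2 (v + W 1 - W 3) ≤ grd W 2 v := by
  obtain ⟨h1, h12, h23, h34⟩ := hW.chain_four
  have hW1 : IsCurrency W 1 := hW.mono (by norm_num)
  rcases lt_or_ge (v + W 1) (W 4) with hd | hd
  · exact hO.grd_add_sub_le hW (by norm_num) (by norm_num) hv hle hd
  have hgap := hO.coin_one_le_gap_add_one hW
  obtain rfl : v = W 3 - 1 := by omega
  rw [show W 3 - 1 + W 1 - W 3 = W 1 - 1 by omega, grd_succ_of_lt hW.1 (show _ < W 2 by omega),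
    grd_one_of_lt hW1 (by omega)]
  rcases hO.coin_three_sub_gap_eq hW (by omega) with h | h | h
  · omega
  · rcases hO.coin_two_sub_gap_eq hW (by omega) with h' | h' <;> omega
  · rw [show W 3 - 1 = 1 * W 2 + (W 1 - 2) by omega,
      grd_mul_add (hW.mono (by norm_num)) 1 (show _ < W 2 by omega), grd_one_of_lt hW1 (by omega)]
    omega

theorem orderly_two_of_orderly_four (hW : IsCurrency W 4) (hO : Orderly W 4) : Orderly W 2 := by
  by_contra h
  obtain ⟨q, r, hb, hq, hr, hqr⟩ :=
    exists_eq_mul_add_of_not_orderly_two (hW.mono (by norm_num)) h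
  obtain ⟨h1, h12, h23, h34⟩ := hW.chain_four
  have hW1 : IsCurrency W 1 := hW.mono (by norm_num)
  have hc_le : W 3 + r ≤ W 1 + W 2 := by
    by_contra hc
    have h := hO.grd_add_sub_le hW (k := 1) (j := 1) (v := W 2 - r) (by norm_num) le_rfl
      (show _ < W 2 by omega) (show W 2 ≤ _ by omega) (show _ < W 3 by omega)
    rw [show W 2 - r + W 1 - W 2 = W 1 - r by omega, grd_one_of_lt hW1 (by omega),
      show W 2 - r = q * W 1 + 0 by omega, grd_one_mul_add hW1 q (by omega)] at h
    omega
  have hc_ge : W 1 + W 2 ≤ W 3 + 1 := by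
    have h := hO.grd_two_add_coin_one_sub_le hW (v := W 3 - 1) (by omega) (by omega)
    rw [show W 3 - 1 + W 1 - W 3 = W 1 - 1 by omega, grd_succ_of_lt hW.1 (show _ < W 2 by omega),
      grd_one_of_lt hW1 (by omega), show W 3 - 1 = 1 * W 2 + (W 3 - W 2 - 1) by omega,
      grd_mul_add (hW.mono (by norm_num)) 1 (show _ < W 2 by omega),
      grd_one_of_lt hW1 (by omega)] at h
    omega
  -- So `r = 1` and `c = a + b - 1`; the amount `2 b + d` is overpaid unless `d ≤ 2 b`.
  have h2b := grd_three_two_mul (hW.mono (by norm_num)) (q := q) (by omega) hq (by omega) (by omega)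
  rcases lt_or_ge (2 * W 2) (W 4) with hd | hd
  · have h := hO.grd_mul_add_mul_le hW.1 (i := 2) (j := 4) (by norm_num) (by norm_num) 0 2 1
    rw [show 0 + 2 * W 2 + 1 * W 4 = 2 * W 2 + W 4 by omega, grd_add_top hW,
      grd_succ_of_lt hW.1 (show _ < W 4 from hd), h2b] at h
    omega
  -- Now `d - c < b`, so the coin identities give `d - c = b - a` and then `b = 2 a - 1`.
  have hgap : W 2 - (W 4 - W 3) = W 1 := by
    rcases hO.coin_two_sub_gap_eq hW (by omega) with h' | h' <;> omega
  have hb' : W 2 = 2 * W 1 - 1 := by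
    rcases hO.coin_three_sub_gap_eq hW (by omega) with h' | h' | h' <;> omega
  have hq1 : q < 2 := Nat.lt_of_mul_lt_mul_right (a := W 1) (by omega)
  obtain rfl : q = 1 := by omega
  omega

theorem Orderly.eq_special_of_gap_eq_pred (hO : Orderly W 4) (hW : IsCurrency W 4)
    (hd : W 4 + 1 = W 3 + W 2) (hgt : grd W 2 (W 3 - 1) < grd W 2 (W 2 - 1)) :
    W 1 = 2 ∧ 4 ≤ W 2 ∧ W 3 = W 2 + 1 ∧ W 4 = 2 * W 2 := by
  obtain ⟨h1, h12, h23, h34⟩ := hW.chain_four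
  have hW1 : IsCurrency W 1 := hW.mono (by norm_num)
  have hW2 : IsCurrency W 2 := hW.mono (by norm_num)
  rcases hO.coin_three_sub_gap_eq hW (by omega) with h | h | h
  · omega
  · rcases (show W 1 = 2 ∨ 3 ≤ W 1 by omega) with ha | ha
    · refine ⟨ha, ?_, by omega, by omega⟩
      by_contra hb
      rw [show W 3 - 1 = W 2 by omega, show W 2 - 1 = W 1 by omega, grd_coin hW2 le_rfl,
        grd_coin hW2 (by norm_num)] at hgt
      omega
    · exfalso
      have h' : grd W 2 (W 2 + W 2 - W 3) ≤ grd W 2 (W 2) :=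
        hO.grd_add_sub_le hW (by norm_num) le_rfl (show W 2 < W 3 from h23)
          (show W 3 ≤ W 2 + W 2 by omega) (show _ < W 4 by omega)
      rw [grd_coin hW2 le_rfl, ← grd_succ_of_lt hW.1 (show _ < W 3 by omega)] at h'
      rcases eq_of_grd_three_le_one (hW.mono (by norm_num)) h' with h' | h' | h' | h' | h' <;>
        try omega
      rw [show W 3 - 1 = 1 * W 2 + (W 1 - 2) by omega,
        grd_mul_add hW2 1 (show _ < W 2 by omega), grd_one_of_lt hW1 (by omega),
        grd_succ_of_lt hW.1 (show W 2 - 1 < W 2 by omega),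
        show W 2 - 1 = 1 * W 1 + (W 1 - 2) by omega, grd_one_mul_add hW1 1 (by omega)] at hgt
      omega
  · exfalso
    have hstep := (orderly_one hW1).grd_add_le hW.1 (j := 0) (by norm_num) (W 2 - 2)
    rw [show W 3 - 1 = 1 * W 2 + (W 2 - 2) by omega, grd_mul_add hW2 1 (show _ < W 2 by omega),
      grd_succ_of_lt hW.1 (show W 2 - 1 < W 2 by omega)] at hgt
    rw [hW.1, show W 2 - 2 + 1 = W 2 - 1 by omega] at hstep
    omega

theorem Orderly.grd_two_add_coin_two_sub_le (hO : Orderly W 4) (hW : IsCurrency W 4)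
    (hd : W 4 + W 1 = W 3 + W 2) {v : ℕ} (hv : v < W 3) (hdv : W 4 ≤ v + W 2) :
    grd W 2 (v + W 2 - W 3) ≤ grd W 2 v := by
  obtain ⟨h1, h12, h23, h34⟩ := hW.chain_four
  have hW1 : IsCurrency W 1 := hW.mono (by norm_num)
  have hW2 : IsCurrency W 2 := hW.mono (by norm_num)
  rcases hO.coin_three_sub_gap_eq hW (by omega) with h | h | h <;> try omega
  rcases le_or_gt (W 3 + W 1) (v + W 2) with hv' | hv'
  · obtain ⟨x, rfl⟩ : ∃ x, v = x + W 2 := ⟨v - W 2, by omega⟩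
    rw [grd_add_top hW2, grd_succ_of_lt hW.1 (show x < W 2 by omega),
      show x + W 2 + W 2 - W 3 = x + W 1 by omega,
      grd_succ_of_lt hW.1 (show x + W 1 < W 2 by omega), grd_add_top hW1]
  · have hgap := hO.coin_one_le_gap_add_one hW
    obtain rfl : v = W 2 - 1 := by omega
    rw [show W 2 - 1 + W 2 - W 3 = W 1 - 1 by omega,
      grd_succ_of_lt hW.1 (show W 2 - 1 < W 2 by omega),
      grd_succ_of_lt hW.1 (show W 1 - 1 < W 2 by omega),
      grd_one_of_lt hW1 (show W 1 - 1 < W 1 by omega),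
      show W 2 - 1 = 1 * W 1 + (W 1 - 2) by omega, grd_one_mul_add hW1 1 (by omega)]
    omega

theorem Orderly.eq_special_of_not_orderly_three (hO : Orderly W 4) (hW : IsCurrency W 4)
    (h3 : ¬ Orderly W 3) : W 1 = 2 ∧ 4 ≤ W 2 ∧ W 3 = W 2 + 1 ∧ W 4 = 2 * W 2 := by
  obtain ⟨h1, h12, h23, h34⟩ := hW.chain_four
  obtain ⟨v, hv, hle, hgt⟩ :
      ∃ v < W 3, W 3 ≤ v + W 2 ∧ grd W 2 v < grd W 2 (v + W 2 - W 3) := by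
    by_contra hcon
    push Not at hcon
    refine h3 ((orderly_two_of_orderly_four hW hO).succ_of_grd_add_sub_le (hW.mono (by norm_num))
      fun j hj0 hj v (hv : v < W 3) (hle : W 3 ≤ v + W j) => ?_)
    obtain rfl | rfl : j = 1 ∨ j = 2 := by omega
    · exact hO.grd_two_add_coin_one_sub_le hW hv hle
    · exact hcon v hv hle
  have hdv : W 4 ≤ v + W 2 := by
    by_contra hd
    have : grd W 2 (v + W 2 - W 3) ≤ grd W 2 v :=
      hO.grd_add_sub_le hW (by norm_num) le_rfl hv hle (show _ < W 4 by omega)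
    omega
  rcases hO.coin_two_sub_gap_eq hW (by omega) with h | h
  · obtain rfl : v = W 3 - 1 := by omega
    rw [show W 3 - 1 + W 2 - W 3 = W 2 - 1 by omega] at hgt
    exact hO.eq_special_of_gap_eq_pred hW (by omega) hgt
  · exact absurd (hO.grd_two_add_coin_two_sub_le hW (by omega) hv hdv) (by omega)

theorem grd_three_of_special (hW : IsCurrency W 3) (h1 : W 1 = 2) (h3 : W 3 = W 2 + 1) {v : ℕ}
    (hv : v < 2 * W 2) :
    grd W 3 v = if v < W 2 then (v + 1) / 2 else if v = W 2 then 1 else 1 + (v - W 2) / 2 := by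
  have h12 := hW.2 1 2 (by norm_num) (by norm_num)
  have hW1 : IsCurrency W 1 := hW.mono (by norm_num)
  have hW2 : IsCurrency W 2 := hW.mono (by norm_num)
  have hgrd1 (u : ℕ) : grd W 1 u = (u + 1) / 2 := by
    have h := grd_one_mul_add hW1 (u / 2) (show u % 2 < W 1 by omega)
    rw [h1, Nat.div_add_mod'] at h
    omega
  split_ifs with hs hs'
  · rw [grd_succ_of_lt hW.1 (show v < W 3 by omega), grd_succ_of_lt hW.1 (show v < W 2 from hs),
      hgrd1]
  · rw [hs', grd_succ_of_lt hW.1 (show W 2 < W 3 by omega), grd_coin hW2 le_rfl]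
  · have h : grd W 3 (1 * W 3 + (v - W 2 - 1)) = 1 + grd W 2 (v - W 2 - 1) :=
      grd_mul_add hW 1 (show _ < W 3 by omega)
    rw [show 1 * W 3 + (v - W 2 - 1) = v by omega,
      grd_succ_of_lt hW.1 (show v - W 2 - 1 < W 2 by omega), hgrd1] at h
    omega

theorem orderly_of_special (hW : IsCurrency W 4) (h1 : W 1 = 2) (h3 : W 3 = W 2 + 1)
    (h4 : W 4 = 2 * W 2) : Orderly W 4 := by
  have hg (v : ℕ) := grd_three_of_special (hW.mono (by norm_num)) h1 h3 (v := v)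
  refine (orderly_iff_grd_add_le hW.1).2 fun j hj => grd_succ_add_le hW (hW.coin_le_coin hj le_rfl)
    (fun v hv => ?_) (fun v hv hle => ?_)
  · change v + W j < W 4 at hv
    interval_cases j <;> simp only [hW.1, h1, h3, h4] at hv ⊢ <;>
      rw [hg _ (by omega), hg _ (by omega)] <;> split_ifs <;> omega
  · change v < W 4 at hv
    change W 4 ≤ v + W j at hle
    change grd W 3 (v + W j - W 4) ≤ grd W 3 v
    interval_cases j <;> simp only [hW.1, h1, h3, h4] at hv hle ⊢ <;>
      rw [hg _ (by omega), hg _ (by omega)] <;> split_ifs <;> omega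

/-- A five-coin currency `(1, a₁, a₂, a₃, a₄)` is orderly iff either it is
`(1, 2, a, a+1, 2a)` for some `a ≥ 4`, or it is totally orderly. -/
theorem five_coin_orderly_iff (a₁ a₂ a₃ a₄ : ℕ)
    (h1 : 1 < a₁) (h2 : a₁ < a₂) (h3 : a₂ < a₃) (h4 : a₃ < a₄) :
    Orderly (fun i => if i = 0 then 1 else if i = 1 then a₁
      else if i = 2 then a₂ else if i = 3 then a₃ else a₄) 4 ↔
      ((∃ a : ℕ, 4 ≤ a ∧ a₁ = 2 ∧ a₂ = a ∧ a₃ = a + 1 ∧ a₄ = 2 * a) ∨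
        ∀ l ≤ 4, Orderly (fun i => if i = 0 then 1 else if i = 1 then a₁
          else if i = 2 then a₂ else if i = 3 then a₃ else a₄) l) := by
  set W : ℕ → ℕ := fun i => if i = 0 then 1 else if i = 1 then a₁
    else if i = 2 then a₂ else if i = 3 then a₃ else a₄
  have hW : IsCurrency W 4 := ⟨rfl, fun i j hij hj => by
    interval_cases j <;> interval_cases i <;> simp [W] <;> omega⟩
  constructor
  · intro hO
    by_cases hO3 : Orderly W 3
    · refine Or.inr fun l hl => ?_
      interval_cases l
      exacts [orderly_zero hW.1, orderly_one (hW.mono (by norm_num)),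
        orderly_two_of_orderly_three (hW.mono (by norm_num)) hO3, hO3, hO]
    · obtain ⟨ha₁, ha₂, ha₃, ha₄⟩ := hO.eq_special_of_not_orderly_three hW hO3
      exact Or.inl ⟨a₂, ha₂, ha₁, rfl, ha₃, ha₄⟩
  · rintro (⟨a, -, ha₁, rfl, ha₃, ha₄⟩ | htot)
    · exact orderly_of_special hW ha₁ ha₃ ha₄
    · exact htot 4 le_rfl
end
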